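/- Let r > 0, let (X, μ) be a measure space with finite total measure μ(X) = 4πr², and let H : X → ℝ be a μ-integrable function with H ≥ 0. Suppose M is a real number such that for every real m with m ≤ r/2, writing N = √(1 − 2m/r), one has M ≤ m + (1/8π)·∫_X (2r⁻¹·N − H(x))·N dμ(x). Then M ≤ √(μ(X)/(16π))·[1 − (1/(16π·μ(X)))·(∫_X H dμ)²]. -/

import Mathlib

open MeasureTheory Real

/-- Measure-theoretic content of Proposition 2 (refined Shi–Tam estimate):
if `μ(X) = 4πr²`, `H ≥ 0` is integrable, and for every `m ≤ r/2` (with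
`N = √(1 - 2m/r)`) one has `M ≤ m + (1/8π)·∫ (2r⁻¹N − H)·N dμ`, then
`M ≤ √(μ(X)/(16π))·[1 − (1/(16π·μ(X)))·(∫ H dμ)²]`. -/
theorem refined_shi_tam_estimate {X : Type*} [MeasurableSpace X] (μ : Measure X)
    (r : ℝ) (hr : 0 < r)
    (hμ : μ Set.univ = ENNReal.ofReal (4 * Real.pi * r ^ 2))
    (H : X → ℝ) (hInt : Integrable H μ) (hH : ∀ x, 0 ≤ H x) (M : ℝ)
    (hM : ∀ m : ℝ, m ≤ r / 2 →
      M ≤ m + (1 / (8 * Real.pi)) *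
        ∫ x, (2 * r⁻¹ * Real.sqrt (1 - 2 * m / r) - H x) *
          Real.sqrt (1 - 2 * m / r) ∂μ) :
    M ≤ Real.sqrt ((μ Set.univ).toReal / (16 * Real.pi)) *
      (1 - (1 / (16 * Real.pi * (μ Set.univ).toReal)) * (∫ x, H x ∂μ) ^ 2) := by
  have hπ : (0:ℝ) < Real.pi := Real.pi_pos
  have hμr : (μ Set.univ).toReal = 4 * Real.pi * r ^ 2 := by
    rw [hμ, ENNReal.toReal_ofReal (by positivity)]
  set I : ℝ := ∫ x, H x ∂μ with hIdef
  have hI0 : 0 ≤ I := integral_nonneg hH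
  set c : ℝ := I / (8 * Real.pi) with hcdef
  have hc0 : 0 ≤ c := by positivity
  set m₀ : ℝ := r / 2 - c ^ 2 / (2 * r) with hm₀
  have hm₀le : m₀ ≤ r / 2 := by
    have : 0 ≤ c ^ 2 / (2 * r) := by positivity
    linarith
  have h1 : 1 - 2 * m₀ / r = (c / r) ^ 2 := by
    rw [hm₀]
    field_simp
    ring
  have hsqrt : Real.sqrt (1 - 2 * m₀ / r) = c / r := by
    rw [h1, Real.sqrt_sq (by positivity)]
  have key := hM m₀ hm₀le
  rw [hsqrt] at key
  have hfun : (fun x => (2 * r⁻¹ * (c / r) - H x) * (c / r)) =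
      fun x => 2 * r⁻¹ * (c / r) * (c / r) - H x * (c / r) := by
    funext x; ring
  have hμfin : IsFiniteMeasure μ := ⟨by rw [hμ]; exact ENNReal.ofReal_lt_top⟩
  have hint : (∫ x, (2 * r⁻¹ * (c / r) - H x) * (c / r) ∂μ)
      = 2 * r⁻¹ * (c / r) * (c / r) * (4 * Real.pi * r ^ 2) - I * (c / r) := by
    rw [hfun, integral_sub (integrable_const _) (hInt.mul_const _),
      integral_const, integral_mul_const, smul_eq_mul, measureReal_def, hμr, ← hIdef]
    ring
  rw [hint] at key
  -- the integral term vanishes since I = 8πc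
  have hIc : I = 8 * Real.pi * c := by
    rw [hcdef]; field_simp
  have hkey2 : M ≤ m₀ := by
    have hz : m₀ + (1 / (8 * Real.pi)) *
        (2 * r⁻¹ * (c / r) * (c / r) * (4 * Real.pi * r ^ 2) - I * (c / r)) = m₀ := by
      rw [hIc]; field_simp; ring
    calc M ≤ _ := key
      _ = m₀ := hz
  -- compute the right-hand side
  rw [hμr]
  have h2 : (4 * Real.pi * r ^ 2) / (16 * Real.pi) = (r / 2) ^ 2 := by
    field_simp; ring
  rw [h2, Real.sqrt_sq (by positivity)]
  have hRHS : (r / 2) * (1 - 1 / (16 * Real.pi * (4 * Real.pi * r ^ 2)) * I ^ 2) = m₀ := by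
    rw [hIc, hm₀]
    field_simp
    ring
  rw [hRHS]
  exact hkey2
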